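/- arXiv:0909.5632 — 8 statements merged into one kernel-verified Lean document; each statement's English description precedes it below -/
import Mathlib

section
/- If M = (M_k) is a log-convex sequence of positive reals with M_0 = 1, then for all j ≥ 1 and α_1, …, α_j ∈ ℕ_{>0} with α_1 + ⋯ + α_j = k, we have M_j · M_{α_1} ⋯ M_{α_j} ≤ M_1^j · M_k. -/
/-- If `M` is log-convex with `M 0 = 1`, then for `j ≥ 1` and positive `α i`
with `∑ α i = k` we have `M j * ∏ M (α i) ≤ (M 1)^j * M k`. -/
theorem stmt2 (M : ℕ → ℝ) (hpos : ∀ k, 0 < M k) (h0 : M 0 = 1)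
    (hlc : ∀ k, 1 ≤ k → (M k) ^ 2 ≤ M (k - 1) * M (k + 1)) :
    ∀ (j k : ℕ) (α : Fin j → ℕ), 1 ≤ j → (∀ i, 0 < α i) → (∑ i, α i) = k →
      M j * ∏ i, M (α i) ≤ (M 1) ^ j * M k := by
  -- cross ratio monotonicity
  have cross : ∀ m n, n ≤ m → M (n + 1) * M m ≤ M n * M (m + 1) := by
    intro m
    induction m with
    | zero => intro n hn; interval_cases n; simp [mul_comm]
    | succ m ih =>
      intro n hn
      rcases Nat.lt_or_ge n (m + 1) with h | h
      · have h1 := ih n (Nat.lt_succ_iff.mp h)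
        have h2 := hlc (m + 1) (by omega)
        simp only [Nat.add_sub_cancel] at h2
        nlinarith [hpos (n + 1), hpos n, hpos m, hpos (m + 1), hpos (m + 2)]
      · have : n = m + 1 := le_antisymm hn h
        subst this
        nlinarith [hpos (m + 1), hpos (m + 2)]
  -- merging lemma
  have merge : ∀ c b, 1 ≤ b → M (c + 1) * M b ≤ M 1 * M (c + b) := by
    intro c
    induction c with
    | zero => intro b hb; simp
    | succ c ih =>
      intro b hb
      have h1 := ih b hb
      have h2 := cross (c + b) (c + 1) (by omega)
      have : c + 1 + 1 = c + 2 := rfl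
      rw [show c + b + 1 = c + 1 + b by ring] at h2
      nlinarith [hpos (c + 1), hpos (c + 2), hpos b, hpos (c + b), hpos (c + 1 + b), hpos 1]
  -- main auxiliary claim
  have aux : ∀ (j : ℕ) (α : Fin j → ℕ) (s : ℕ), 1 ≤ s → (∀ i, 0 < α i) →
      M s * ∏ i, M (α i) ≤ (M 1) ^ j * M (s + ∑ i, (α i - 1)) := by
    intro j
    induction j with
    | zero => intro α s hs hα; simp
    | succ j ih =>
      intro α s hs hα
      rw [Fin.prod_univ_castSucc, Fin.sum_univ_castSucc]
      set L := α (Fin.last j) with hL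
      have hL1 : 1 ≤ L := hα (Fin.last j)
      have hmerge : M s * M L ≤ M 1 * M (s + (L - 1)) := by
        have := merge (s - 1) L hL1
        rw [show s - 1 + 1 = s by omega, show s - 1 + L = s + (L - 1) by omega] at this
        exact this
      have hih := ih (fun i => α i.castSucc) (s + (L - 1)) (by omega)
        (fun i => hα i.castSucc)
      have hP : 0 < ∏ i : Fin j, M (α i.castSucc) :=
        Finset.prod_pos fun i _ => hpos _
      calc M s * ((∏ i : Fin j, M (α i.castSucc)) * M L)
          = (M s * M L) * ∏ i : Fin j, M (α i.castSucc) := by ring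
        _ ≤ (M 1 * M (s + (L - 1))) * ∏ i : Fin j, M (α i.castSucc) := by
            exact mul_le_mul_of_nonneg_right hmerge hP.le
        _ = M 1 * (M (s + (L - 1)) * ∏ i : Fin j, M (α i.castSucc)) := by ring
        _ ≤ M 1 * ((M 1) ^ j * M (s + (L - 1) + ∑ i : Fin j, (α i.castSucc - 1))) := by
            exact mul_le_mul_of_nonneg_left hih (hpos 1).le
        _ = (M 1) ^ (j + 1) * M (s + (∑ i : Fin j, (α i.castSucc - 1) + (L - 1))) := by
            rw [show s + (L - 1) + ∑ i : Fin j, (α i.castSucc - 1)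
              = s + (∑ i : Fin j, (α i.castSucc - 1) + (L - 1)) by omega]
            ring
  intro j k α hj hα hsum
  have key := aux j α j hj hα
  have hsum2 : j + ∑ i, (α i - 1) = k := by
    have : ∑ i, α i = ∑ i : Fin j, ((α i - 1) + 1) := by
      apply Finset.sum_congr rfl
      intro i _
      have := hα i
      omega
    rw [this, Finset.sum_add_distrib] at hsum
    simp at hsum
    omega
  rwa [hsum2] at key
end

section
/- Let M^1 and M^2 be sequences of positive reals. Then F^{M^1} ⊆ F^{M^2} if and only if there exist constants C, ρ > 0 such that M^1_k ≤ C · ρ^k · M^2_k for all k. -/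
/-- Membership in the formal power series class `𝓕^M`. -/
def InFclass (M : ℕ → ℝ) (f : ℕ → ℝ) : Prop :=
  ∃ C : ℝ, 0 < C ∧ ∃ ρ : ℝ, 0 < ρ ∧
    ∀ k, |f k| ≤ C * ρ ^ k * (k.factorial : ℝ) * M k

theorem InFclass.of_le_mul_pow {M₁ M₂ f : ℕ → ℝ} {C ρ : ℝ} (hC : 0 < C) (hρ : 0 < ρ)
    (hM : ∀ k, M₁ k ≤ C * ρ ^ k * M₂ k) (hf : InFclass M₁ f) : InFclass M₂ f := by
  obtain ⟨C', hC', ρ', hρ', hb⟩ := hf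
  refine ⟨C' * C, mul_pos hC' hC, ρ' * ρ, mul_pos hρ' hρ, fun k => ?_⟩
  calc |f k| ≤ C' * ρ' ^ k * k.factorial * M₁ k := hb k
    _ ≤ C' * ρ' ^ k * k.factorial * (C * ρ ^ k * M₂ k) := by gcongr; exact hM k
    _ = C' * C * (ρ' * ρ) ^ k * k.factorial * M₂ k := by ring

theorem inFclass_factorial_mul_iff {M N : ℕ → ℝ} :
    InFclass M (fun k => k.factorial * N k) ↔
      ∃ C : ℝ, 0 < C ∧ ∃ ρ : ℝ, 0 < ρ ∧ ∀ k, |N k| ≤ C * ρ ^ k * M k := by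
  refine exists_congr fun C => and_congr_right fun _ => exists_congr fun ρ =>
    and_congr_right fun _ => forall_congr' fun k => ?_
  have hk : (0 : ℝ) < k.factorial := Nat.cast_pos.mpr k.factorial_pos
  rw [abs_mul, Nat.abs_cast, show C * ρ ^ k * k.factorial * M k = k.factorial * (C * ρ ^ k * M k)
    by ring, mul_le_mul_iff_of_pos_left hk]

theorem stmt5_general (M1 M2 : ℕ → ℝ) (h1 : ∀ k, 0 < M1 k) :
    (∀ f, InFclass M1 f → InFclass M2 f) ↔
      ∃ C : ℝ, 0 < C ∧ ∃ ρ : ℝ, 0 < ρ ∧ ∀ k, M1 k ≤ C * ρ ^ k * M2 k := by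
  constructor
  · intro h
    have htest : InFclass M1 (fun k => k.factorial * M1 k) :=
      inFclass_factorial_mul_iff.mpr
        ⟨1, one_pos, 1, one_pos, fun k => by simp [abs_of_pos (h1 k)]⟩
    obtain ⟨C, hC, ρ, hρ, hb⟩ := inFclass_factorial_mul_iff.mp (h _ htest)
    exact ⟨C, hC, ρ, hρ, fun k => (le_abs_self _).trans (hb k)⟩
  · rintro ⟨C, hC, ρ, hρ, hM⟩ f
    exact InFclass.of_le_mul_pow hC hρ hM

/-- `𝓕^{M¹} ⊆ 𝓕^{M²}` iff `M¹_k ≤ C ρ^k M²_k` for some constants `C, ρ > 0`. -/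
theorem stmt5 (M1 M2 : ℕ → ℝ) (h1 : ∀ k, 0 < M1 k) (h2 : ∀ k, 0 < M2 k) :
    (∀ f, InFclass M1 f → InFclass M2 f) ↔
      ∃ C : ℝ, 0 < C ∧ ∃ ρ : ℝ, 0 < ρ ∧ ∀ k, M1 k ≤ C * ρ ^ k * M2 k :=
  stmt5_general M1 M2 h1
end

section
/- Let M and L be sequences of positive reals, f ∈ F^M, and g ∈ F^L with g_0 = 0. Then the formal composite f ∘ g belongs to F^{M∘L}, where (M∘L)_k := max{ M_j · L_{α_1} ⋯ L_{α_j} : j ≥ 1, α_i ∈ ℕ_{>0}, α_1 + ⋯ + α_j = k }. -/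
/-- Coefficients of the formal composite `f ∘ g` (for `g 0 = 0`),
via Faà di Bruno's formula. -/
noncomputable def compCoeff (f g : ℕ → ℝ) : ℕ → ℝ := fun k =>
  if k = 0 then f 0 else
    (k.factorial : ℝ) * ∑ j ∈ Finset.Icc 1 k, (f j / (j.factorial : ℝ)) *
      ∑ α ∈ (Finset.Nat.antidiagonalTuple j k).filter (fun α => ∀ i, 0 < α i),
        ∏ i, g (α i) / ((α i).factorial : ℝ)

/-- The composed weight sequence `(M ∘ L)_k = max { M_j L_{α₁} ⋯ L_{α_j} }`. -/
noncomputable def seqComp (M L : ℕ → ℝ) : ℕ → ℝ := fun k =>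
  if k = 0 then M 0 else
    sSup {x : ℝ | ∃ j : ℕ, 1 ≤ j ∧ ∃ α : Fin j → ℕ,
      (∀ i, 0 < α i) ∧ (∑ i, α i) = k ∧ x = M j * ∏ i, L (α i)}

/-! With `|f_j / j!| ≤ C ρ^j M_j` and `|g_a / a!| ≤ C' σ^a L_a`, the Faà di Bruno term indexed by
`j` and a composition `α` of `k` into `j` parts is at most `C (ρC')^j σ^k M_j L_{α₁} ⋯ L_{α_j}`,
hence at most `C (max 1 (ρC'))^k σ^k (M∘L)_k` because `j ≤ k`. There are at most `k · 2^k` such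
terms, and this count is absorbed into the geometric factor `4^k`. -/

open Finset

abbrev posTuples (j k : ℕ) : Finset (Fin j → ℕ) :=
  (Nat.antidiagonalTuple j k).filter fun α => ∀ i, 0 < α i

lemma mem_posTuples {j k : ℕ} {α : Fin j → ℕ} :
    α ∈ posTuples j k ↔ ∑ i, α i = k ∧ ∀ i, 0 < α i := by
  rw [mem_filter, Nat.mem_antidiagonalTuple]

lemma le_of_mem_posTuples {j k : ℕ} {α : Fin j → ℕ} (hα : α ∈ posTuples j k) (i : Fin j) :
    α i ≤ k :=
  (mem_posTuples.1 hα).1 ▸ single_le_sum (fun _ _ => Nat.zero_le _) (mem_univ i)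

lemma card_le_of_mem_posTuples {j k : ℕ} {α : Fin j → ℕ} (hα : α ∈ posTuples j k) : j ≤ k := by
  obtain ⟨hsum, hpos⟩ := mem_posTuples.1 hα
  calc j = ∑ _i : Fin j, 1 := by simp
    _ ≤ ∑ i, α i := sum_le_sum fun i _ => hpos i
    _ = k := hsum

lemma sum_Icc_one_half_pow_le_one (k : ℕ) : ∑ a ∈ Icc 1 k, (1 / 2 : ℝ) ^ a ≤ 1 := by
  rw [← Ico_succ_right_eq_Icc, sum_Ico_eq_sum_range]
  simp only [Nat.succ_eq_succ, Nat.succ_sub_one, pow_add, pow_one, add_comm 1]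
  rw [← sum_mul]
  linarith [sum_geometric_two_le k]

/-- Each composition carries weight `2⁻ᵏ = ∏ 2^{-αᵢ}`, and the total weight of all `j`-tuples
with entries in `[1, k]` is `(∑_{a=1}^k 2^{-a})^j ≤ 1`. -/
lemma card_posTuples_le (j k : ℕ) : ((posTuples j k).card : ℝ) ≤ 2 ^ k := by
  have hweight : ((posTuples j k).card : ℝ) * (1 / 2) ^ k
      = ∑ α ∈ posTuples j k, ∏ i, (1 / 2 : ℝ) ^ α i := by
    rw [← nsmul_eq_mul, ← sum_const]
    refine sum_congr rfl fun α hα => ?_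
    rw [prod_pow_eq_pow_sum, (mem_posTuples.1 hα).1]
  have hsub : posTuples j k ⊆ Fintype.piFinset fun _ => Icc 1 k := fun α hα =>
    Fintype.mem_piFinset.2 fun i => mem_Icc.2 ⟨(mem_posTuples.1 hα).2 i, le_of_mem_posTuples hα i⟩
  have hle : ((posTuples j k).card : ℝ) * (1 / 2) ^ k ≤ 1 :=
    calc ((posTuples j k).card : ℝ) * (1 / 2) ^ k
        ≤ ∑ α ∈ Fintype.piFinset (fun _ : Fin j => Icc 1 k), ∏ i, (1 / 2 : ℝ) ^ α i :=
          hweight ▸ sum_le_sum_of_subset_of_nonneg hsub fun _ _ _ => by positivity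
      _ = (∑ a ∈ Icc 1 k, (1 / 2 : ℝ) ^ a) ^ j := by
          rw [← prod_univ_sum, prod_const, card_univ, Fintype.card_fin]
      _ ≤ 1 := pow_le_one₀ (by positivity) (sum_Icc_one_half_pow_le_one k)
  rwa [one_div_pow, mul_one_div, div_le_one (by positivity)] at hle

lemma le_seqComp (M L : ℕ → ℝ) {k j : ℕ} (hk : k ≠ 0) (hj : 1 ≤ j) {α : Fin j → ℕ}
    (hα : α ∈ posTuples j k) : M j * ∏ i, L (α i) ≤ seqComp M L k := by
  rw [seqComp, if_neg hk]
  refine le_csSup ?_ ⟨j, hj, α, (mem_posTuples.1 hα).2, (mem_posTuples.1 hα).1, rfl⟩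
  refine (Set.Finite.subset ((Icc 1 k).biUnion fun j =>
    (posTuples j k).image fun α => M j * ∏ i, L (α i)).finite_toSet ?_).bddAbove
  rintro _ ⟨j', hj', α', hpos, hsum, rfl⟩
  have hα' : α' ∈ posTuples j' k := mem_posTuples.2 ⟨hsum, hpos⟩
  simp only [coe_biUnion, coe_image, Set.mem_iUnion, Set.mem_image, mem_coe, mem_Icc]
  exact ⟨j', ⟨hj', card_le_of_mem_posTuples hα'⟩, α', hα', rfl⟩

lemma InFclass.nonneg {M f : ℕ → ℝ} (hf : InFclass M f) (k : ℕ) : 0 ≤ M k := by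
  obtain ⟨C, hC, ρ, hρ, hbound⟩ := hf
  exact nonneg_of_mul_nonneg_right ((abs_nonneg _).trans (hbound k)) (by positivity)

lemma seqComp_nonneg {M L : ℕ → ℝ} (hM : ∀ k, 0 ≤ M k) (hL : ∀ k, 0 ≤ L k) (k : ℕ) :
    0 ≤ seqComp M L k := by
  rcases eq_or_ne k 0 with rfl | hk
  · simpa [seqComp] using hM 0
  · refine le_trans ?_ (le_seqComp M L hk le_rfl (α := fun _ => k) ?_)
    · exact mul_nonneg (hM 1) (prod_nonneg fun _ _ => hL k)
    · exact mem_posTuples.2 ⟨by simp, fun _ => Nat.pos_of_ne_zero hk⟩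

lemma inFclass_iff {M f : ℕ → ℝ} :
    InFclass M f ↔ ∃ C > 0, ∃ ρ > 0, ∀ k, |f k / k.factorial| ≤ C * ρ ^ k * M k := by
  refine exists_congr fun C => and_congr_right fun _ => exists_congr fun ρ =>
    and_congr_right fun _ => forall_congr' fun k => ?_
  rw [abs_div, Nat.abs_cast, div_le_iff₀ (by positivity), mul_right_comm _ (k.factorial : ℝ)]

lemma compCoeff_div_factorial {f g : ℕ → ℝ} {k : ℕ} (hk : k ≠ 0) :
    compCoeff f g k / k.factorial = ∑ j ∈ Icc 1 k, ∑ α ∈ posTuples j k,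
      f j / j.factorial * ∏ i, g (α i) / (α i).factorial := by
  rw [compCoeff, if_neg hk, mul_div_cancel_left₀ _ (by positivity)]
  simp_rw [mul_sum]

section Bounds

variable {M L f g : ℕ → ℝ} {Cf ρf Cg ρg : ℝ}
  (hf : ∀ j, |f j / j.factorial| ≤ Cf * ρf ^ j * M j)
  (hg : ∀ a, |g a / a.factorial| ≤ Cg * ρg ^ a * L a)
include hf hg

lemma abs_faaDiBruno_term_le {j k : ℕ} {α : Fin j → ℕ} (hα : α ∈ posTuples j k) :
    |f j / j.factorial * ∏ i, g (α i) / (α i).factorial|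
      ≤ Cf * (ρf * Cg) ^ j * ρg ^ k * (M j * ∏ i, L (α i)) :=
  calc |f j / j.factorial * ∏ i, g (α i) / (α i).factorial|
      ≤ Cf * ρf ^ j * M j * ∏ i, (Cg * ρg ^ α i * L (α i)) := by
        rw [abs_mul, abs_prod]
        exact mul_le_mul (hf j) (prod_le_prod (fun _ _ => abs_nonneg _) fun i _ => hg (α i))
          (prod_nonneg fun _ _ => abs_nonneg _) ((abs_nonneg _).trans (hf j))
    _ = Cf * (ρf * Cg) ^ j * ρg ^ k * (M j * ∏ i, L (α i)) := by
        rw [prod_mul_distrib, prod_mul_distrib, prod_const, card_univ, Fintype.card_fin,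
          prod_pow_eq_pow_sum, (mem_posTuples.1 hα).1]
        ring

lemma abs_compCoeff_div_factorial_le (hM : ∀ j, 0 ≤ M j) (hL : ∀ a, 0 ≤ L a)
    (hCf : 0 ≤ Cf) (hρf : 0 ≤ ρf) (hCg : 0 ≤ Cg) (hρg : 0 ≤ ρg) {k : ℕ} (hk : k ≠ 0) :
    |compCoeff f g k / k.factorial|
      ≤ Cf * (4 * max 1 (ρf * Cg) * ρg) ^ k * seqComp M L k := by
  set B := max 1 (ρf * Cg)
  set A := Cf * (B * ρg) ^ k * seqComp M L k
  have hA : 0 ≤ A := by have := seqComp_nonneg hM hL k; positivity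
  have hterm : ∀ j ∈ Icc 1 k, ∀ α ∈ posTuples j k,
      |f j / j.factorial * ∏ i, g (α i) / (α i).factorial| ≤ A := by
    intro j hj α hα
    have hpow : (ρf * Cg) ^ j ≤ B ^ k :=
      (pow_le_pow_left₀ (by positivity) (le_max_right _ _) j).trans
        (pow_le_pow_right₀ (le_max_left _ _) (mem_Icc.1 hj).2)
    have hML : M j * ∏ i, L (α i) ≤ seqComp M L k := le_seqComp M L hk (mem_Icc.1 hj).1 hα
    calc _ ≤ Cf * (ρf * Cg) ^ j * ρg ^ k * (M j * ∏ i, L (α i)) :=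
          abs_faaDiBruno_term_le hf hg hα
      _ ≤ Cf * B ^ k * ρg ^ k * seqComp M L k := by
          have := prod_nonneg fun i (_ : i ∈ univ) => hL (α i)
          have := hM j
          gcongr
      _ = A := by ring
  rw [compCoeff_div_factorial hk]
  calc _ ≤ ∑ j ∈ Icc 1 k, ∑ α ∈ posTuples j k,
        |f j / j.factorial * ∏ i, g (α i) / (α i).factorial| :=
        (abs_sum_le_sum_abs _ _).trans (sum_le_sum fun _ _ => abs_sum_le_sum_abs _ _)
    _ ≤ ∑ j ∈ Icc 1 k, ((posTuples j k).card : ℝ) * A := by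
        gcongr with j hj
        simpa [nsmul_eq_mul] using sum_le_card_nsmul _ _ _ (hterm j hj)
    _ ≤ ∑ _j ∈ Icc 1 k, (2 : ℝ) ^ k * A := by
        gcongr with j
        exact card_posTuples_le j k
    _ = k * 2 ^ k * A := by simp [sum_const, mul_assoc]
    _ ≤ 2 ^ k * 2 ^ k * A := by
        gcongr
        exact_mod_cast Nat.lt_two_pow_self.le
    _ = Cf * (4 * B * ρg) ^ k * seqComp M L k := by
        rw [← mul_pow]
        ring

end Bounds

theorem stmt6_general (M L : ℕ → ℝ) (f g : ℕ → ℝ) (hf : InFclass M f) (hg : InFclass L g) :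
    InFclass (seqComp M L) (compCoeff f g) := by
  obtain ⟨Cf, hCf, ρf, hρf, hfb⟩ := inFclass_iff.1 hf
  obtain ⟨Cg, hCg, ρg, hρg, hgb⟩ := inFclass_iff.1 hg
  refine inFclass_iff.2 ⟨Cf, hCf, 4 * max 1 (ρf * Cg) * ρg, by positivity, fun k => ?_⟩
  rcases eq_or_ne k 0 with rfl | hk
  · simpa [compCoeff, seqComp] using hfb 0
  · exact abs_compCoeff_div_factorial_le hfb hgb hf.nonneg hg.nonneg
      hCf.le hρf.le hCg.le hρg.le hk

/-- Composition of formal power series: `𝓕^M ∘ 𝓕^L_{>0} ⊆ 𝓕^{M∘L}`. -/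
theorem stmt6 (M L : ℕ → ℝ) (hM : ∀ k, 0 < M k) (hL : ∀ k, 0 < L k)
    (f g : ℕ → ℝ) (hf : InFclass M f) (hg : InFclass L g) (hg0 : g 0 = 0) :
    InFclass (seqComp M L) (compCoeff f g) :=
  stmt6_general M L f g hf hg
end

section
/- Let Q = (Q_k) be a sequence with Q_0 = 1, Q increasing with Q_1 > 1, and define m_k := (k! Q_k)^{1/k} (m_0 := 1) and the check sequence recursively by m̌_0 = 1, m̌_{k+1} = m̌_k · (m_{k+1} − 1)/m_k. Then m_k = m̌_k · (1 + Σ_{j=1}^k 1/m̌_j) for all k ≥ 0. -/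
/-! By induction on `k`: multiplying the recursion for `m̌ (k+1)` by `1 + ∑_{j ≤ k} 1 / m̌ j` and
using the identity at `k` gives `m (k+1) - 1`, and the new summand contributes the missing `1`.
The divisions involved are legitimate because `m k > 1` for `k ≥ 1`. -/

open Finset

section CheckSequence

variable {K : Type*} [Field K] {m mc : ℕ → K}

theorem check_seq_ne_zero (hm_ne_zero : ∀ k, m k ≠ 0) (hm_ne_one : ∀ k, m (k + 1) ≠ 1)
    (hmc0 : mc 0 ≠ 0) (hmc : ∀ k, mc (k + 1) = mc k * (m (k + 1) - 1) / m k) :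
    ∀ k, mc k ≠ 0
  | 0 => hmc0
  | k + 1 => by
    rw [hmc k]
    exact div_ne_zero (mul_ne_zero (check_seq_ne_zero hm_ne_zero hm_ne_one hmc0 hmc k)
      (sub_ne_zero.mpr (hm_ne_one k))) (hm_ne_zero k)

theorem eq_check_seq_mul_one_add_sum_inv (hm_ne_zero : ∀ k, m k ≠ 0)
    (hm_ne_one : ∀ k, m (k + 1) ≠ 1) (hmc0 : mc 0 = m 0)
    (hmc : ∀ k, mc (k + 1) = mc k * (m (k + 1) - 1) / m k) :
    ∀ k, m k = mc k * (1 + ∑ j ∈ Icc 1 k, 1 / mc j) := by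
  have hmc_ne_zero := check_seq_ne_zero hm_ne_zero hm_ne_one (hmc0 ▸ hm_ne_zero 0) hmc
  intro k
  induction k with
  | zero => simp [hmc0]
  | succ k ih =>
    have hstep : mc (k + 1) * (1 + ∑ j ∈ Icc 1 k, 1 / mc j) = m (k + 1) - 1 := by
      rw [hmc k, div_mul_eq_mul_div, mul_right_comm, ← ih, mul_div_cancel_left₀ _ (hm_ne_zero k)]
    rw [sum_Icc_succ_top (by omega), ← add_assoc, mul_add, hstep,
      mul_one_div_cancel (hmc_ne_zero (k + 1)), sub_add_cancel]

end CheckSequence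

theorem one_lt_factorial_mul_rpow_one_div {q : ℝ} (hq : 1 < q) {k : ℕ} (hk : 1 ≤ k) :
    1 < ((k.factorial : ℝ) * q) ^ ((1 : ℝ) / k) := by
  have hfac : (1 : ℝ) ≤ k.factorial := by exact_mod_cast k.factorial_pos
  exact Real.one_lt_rpow (by nlinarith) (by positivity)

theorem stmt9_general (Q m mc : ℕ → ℝ)
    (hQmono : Monotone Q) (hQ1 : 1 < Q 1)
    (hm0 : m 0 = 1)
    (hm : ∀ k, 1 ≤ k → m k = ((k.factorial : ℝ) * Q k) ^ ((1 : ℝ) / k))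
    (hmc0 : mc 0 = 1) (hmc : ∀ k, mc (k + 1) = mc k * (m (k + 1) - 1) / m k) :
    ∀ k, m k = mc k * (1 + ∑ j ∈ Finset.Icc 1 k, 1 / mc j) := by
  have hm_gt_one (k : ℕ) (hk : 1 ≤ k) : 1 < m k := by
    rw [hm k hk]
    exact one_lt_factorial_mul_rpow_one_div (hQ1.trans_le (hQmono hk)) hk
  have hm_ne_zero (k : ℕ) : m k ≠ 0 := by
    rcases k with _ | k
    · simp [hm0]
    · exact (zero_lt_one.trans (hm_gt_one (k + 1) (by omega))).ne'
  exact eq_check_seq_mul_one_add_sum_inv hm_ne_zero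
    (fun k => (hm_gt_one (k + 1) (by omega)).ne') (hmc0.trans hm0.symm) hmc

/-- For an increasing sequence `Q` with `Q 0 = 1`, `Q 1 > 1`, and
`m k = (k! Q k)^(1/k)` (`m 0 = 1`), the check sequence defined by
`m̌ 0 = 1`, `m̌ (k+1) = m̌ k * (m (k+1) - 1) / m k` satisfies
`m k = m̌ k * (1 + ∑_{j=1}^k 1 / m̌ j)`. -/
theorem stmt9 (Q m mc : ℕ → ℝ) (hQpos : ∀ k, 0 < Q k) (hQ0 : Q 0 = 1)
    (hQmono : Monotone Q) (hQ1 : 1 < Q 1)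
    (hm0 : m 0 = 1)
    (hm : ∀ k, 1 ≤ k → m k = ((k.factorial : ℝ) * Q k) ^ ((1 : ℝ) / k))
    (hmc0 : mc 0 = 1) (hmc : ∀ k, mc (k + 1) = mc k * (m (k + 1) - 1) / m k) :
    ∀ k, m k = mc k * (1 + ∑ j ∈ Finset.Icc 1 k, 1 / mc j) :=
  stmt9_general Q m mc hQmono hQ1 hm0 hm hmc0 hmc
end

section
/- If L^1 and L^2 are weakly log-convex non-quasianalytic sequences with L^1, L^2 ≥ Q for a weakly log-convex sequence Q, then there exists a weakly log-convex non-quasianalytic sequence L with Q ≤ L ≤ L^1 and L ≤ L^2. In particular, taking L to be defined by letting k!L_k be the log-convex minorant of k!·min(L^1_k, L^2_k) works. -/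
/-- `M` is weakly log-convex: `k ↦ log (k! M k)` is convex. -/
def WeaklyLogConvex (M : ℕ → ℝ) : Prop :=
  ∀ k, (((k + 1).factorial : ℝ) * M (k + 1)) ^ 2 ≤
    ((k.factorial : ℝ) * M k) * (((k + 2).factorial : ℝ) * M (k + 2))

/-- `M` is non-quasianalytic: `∑ 1/(k! M k)^(1/k) < ∞`. -/
def NonQuasianalytic (M : ℕ → ℝ) : Prop :=
  Summable fun k : ℕ => 1 / (((k.factorial : ℝ) * M k) ^ ((1 : ℝ) / k))

/-!
Write `a k = k! L1 k` and `b k = k! L2 k`. Log-convexity says that the ratios `a (k+1) / a k`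
increase, and for such sequences non-quasianalyticity is equivalent to `∑ a k / a (k+1) < ∞`:
one direction because `a (k+1) ≤ a 0 * (a (k+1) / a k) ^ (k+1)`, the other by Carleman's
inequality `∑_{k ≥ 1} (t 0 ⋯ t (k-1)) ^ (1/k) ≤ 2e ∑ t k`. The pointwise minimum `r k` of the
two ratio sequences is again increasing, and `∑ 1 / r k ≤ ∑ a k / a (k+1) + ∑ b k / b (k+1) < ∞`, so
`m k = min (a 0) (b 0) * r 0 ⋯ r (k-1)` is log-convex, non-quasianalytic and below `a` and `b`.
Finally `L k = max (Q k) (m k / k!)` works, since a maximum of log-convex sequences is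
log-convex and enlarging a sequence keeps it non-quasianalytic.
-/

open Finset Real
open scoped Nat

lemma div_exp_one_le_factorial_rpow {n : ℕ} (hn : n ≠ 0) :
    (n : ℝ) / exp 1 ≤ (n ! : ℝ) ^ ((1 : ℝ) / n) := by
  have hpow : ((n : ℝ) / exp 1) ^ n ≤ n ! := by
    have h := pow_div_factorial_le_exp (n : ℝ) (Nat.cast_nonneg n) n
    rw [div_le_iff₀ (by positivity), ← exp_one_pow] at h
    rw [div_pow, div_le_iff₀ (by positivity)]
    linarith
  calc (n : ℝ) / exp 1 = (((n : ℝ) / exp 1) ^ n) ^ ((1 : ℝ) / n) := by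
        rw [one_div, pow_rpow_inv_natCast (by positivity) hn]
    _ ≤ (n ! : ℝ) ^ ((1 : ℝ) / n) := rpow_le_rpow (by positivity) hpow (by positivity)

lemma rpow_one_div_natCast_le_max_one {x : ℝ} (hx : 0 ≤ x) (n : ℕ) :
    x ^ ((1 : ℝ) / n) ≤ max 1 x := by
  have hn : (1 : ℝ) / n ≤ 1 := by
    rcases n.eq_zero_or_pos with rfl | hn
    · simp
    · exact div_le_one_of_le₀ (by exact_mod_cast hn) (by positivity)
  calc x ^ ((1 : ℝ) / n) ≤ (max 1 x) ^ ((1 : ℝ) / n) :=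
        rpow_le_rpow hx (le_max_right 1 x) (by positivity)
    _ ≤ max 1 x := rpow_le_self_of_one_le (le_max_left 1 x) hn

-- AM-GM for the numbers `(i + 1) * t i`, whose product is `j! * ∏ t i`, then `j! ^ (1/j) ≥ j/e`.
lemma geom_mean_le_weighted_sum {t : ℕ → ℝ} (ht : ∀ i, 0 ≤ t i) {j : ℕ} (hj : j ≠ 0) :
    (∏ i ∈ range j, t i) ^ ((1 : ℝ) / j) ≤
      exp 1 * (∑ i ∈ range j, ((i : ℝ) + 1) * t i) / j ^ 2 := by
  have hj' : (0 : ℝ) < j := by positivity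
  have hw : ∀ i : ℕ, 0 ≤ ((i : ℝ) + 1) * t i := fun i => mul_nonneg (by positivity) (ht i)
  have hAM : (j ! * ∏ i ∈ range j, t i) ^ ((1 : ℝ) / j) ≤
      (∑ i ∈ range j, ((i : ℝ) + 1) * t i) / j := by
    have hfact : (j ! : ℝ) * ∏ i ∈ range j, t i = ∏ i ∈ range j, ((i : ℝ) + 1) * t i := by
      rw [prod_mul_distrib]; push_cast [← prod_range_add_one_eq_factorial]; rfl
    rw [hfact, ← finsetProd_rpow _ _ (fun i _ => hw i)]
    refine (geom_mean_le_arith_mean_weighted _ _ _ (fun _ _ => by positivity) ?_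
      (fun i _ => hw i)).trans_eq ?_
    · simp [hj'.ne']
    · rw [← mul_sum, one_div, inv_mul_eq_div]
  rw [mul_rpow (by positivity) (prod_nonneg fun i _ => ht i)] at hAM
  calc (∏ i ∈ range j, t i) ^ ((1 : ℝ) / j)
      ≤ ((∑ i ∈ range j, ((i : ℝ) + 1) * t i) / j) / (j ! ^ ((1 : ℝ) / j)) := by
        rw [le_div_iff₀ (by positivity)]; linarith
    _ ≤ ((∑ i ∈ range j, ((i : ℝ) + 1) * t i) / j) / (j / exp 1) :=
        div_le_div_of_nonneg_left (div_nonneg (sum_nonneg fun i _ => hw i) hj'.le) (by positivity)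
          (div_exp_one_le_factorial_rpow hj)
    _ = exp 1 * (∑ i ∈ range j, ((i : ℝ) + 1) * t i) / j ^ 2 := by field_simp

lemma summable_weighted_partial_sum_div_sq {t : ℕ → ℝ} (ht : ∀ i, 0 ≤ t i) (hsum : Summable t) :
    Summable fun j : ℕ => (∑ i ∈ range j, ((i : ℝ) + 1) * t i) / j ^ 2 := by
  refine summable_of_sum_range_le (c := 2 * ∑' i, t i)
    (fun j => div_nonneg (sum_nonneg fun i _ => mul_nonneg (by positivity) (ht i)) (by positivity))
    fun N => ?_
  calc ∑ j ∈ range N, (∑ i ∈ range j, ((i : ℝ) + 1) * t i) / j ^ 2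
      = ∑ i ∈ range N, ((i : ℝ) + 1) * t i * ∑ j ∈ Ioo i N, ((j : ℝ) ^ 2)⁻¹ := by
        simp_rw [sum_div, mul_sum, range_eq_Ico, ← sum_Ico_Ico_comm', Ico_add_one_left_eq_Ioo,
          div_eq_mul_inv]
    _ ≤ ∑ i ∈ range N, ((i : ℝ) + 1) * t i * (2 / (i + 1)) :=
        sum_le_sum fun i _ => mul_le_mul_of_nonneg_left (sum_Ioo_inv_sq_le i N)
          (mul_nonneg (by positivity) (ht i))
    _ = 2 * ∑ i ∈ range N, t i := by
        rw [mul_sum]; exact sum_congr rfl fun i _ => by field_simp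
    _ ≤ 2 * ∑' i, t i := by gcongr; exact hsum.sum_le_tsum _ fun i _ => ht i

theorem summable_geom_mean_of_summable {t : ℕ → ℝ} (ht : ∀ i, 0 ≤ t i) (hsum : Summable t) :
    Summable fun j : ℕ => (∏ i ∈ range j, t i) ^ ((1 : ℝ) / j) := by
  have hbound := (summable_weighted_partial_sum_div_sq ht hsum).mul_left (exp 1)
  refine hbound.of_norm_bounded_eventually_nat ?_
  filter_upwards [Filter.eventually_ne_atTop 0] with j hj
  rw [norm_of_nonneg (rpow_nonneg (prod_nonneg fun i _ => ht i) _), ← mul_div_assoc]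
  exact geom_mean_le_weighted_sum ht hj

lemma summable_one_div_rpow_of_le {a b : ℕ → ℝ} (ha : ∀ k, 0 < a k) (hab : ∀ k, a k ≤ b k)
    (hsum : Summable fun k : ℕ => 1 / a k ^ ((1 : ℝ) / k)) :
    Summable fun k : ℕ => 1 / b k ^ ((1 : ℝ) / k) :=
  hsum.of_nonneg_of_le (fun k => by have := (ha k).trans_le (hab k); positivity)
    fun k => one_div_le_one_div_of_le (by have := ha k; positivity)
      (rpow_le_rpow (ha k).le (hab k) (by positivity))

def LogConvexSeq (a : ℕ → ℝ) : Prop :=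
  ∀ k, a (k + 1) ^ 2 ≤ a k * a (k + 2)

lemma weaklyLogConvex_iff {M : ℕ → ℝ} :
    WeaklyLogConvex M ↔ LogConvexSeq fun k => (k ! : ℝ) * M k :=
  Iff.rfl

namespace LogConvexSeq

variable {a b : ℕ → ℝ}

lemma sup (ha : LogConvexSeq a) (hb : LogConvexSeq b) (ha0 : ∀ k, 0 ≤ a k)
    (hb0 : ∀ k, 0 ≤ b k) : LogConvexSeq fun k => max (a k) (b k) := by
  intro k
  dsimp only
  rcases max_choice (a (k + 1)) (b (k + 1)) with h | h <;> rw [h]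
  · exact (ha k).trans (mul_le_mul (le_max_left _ _) (le_max_left _ _) (ha0 _)
      ((ha0 k).trans (le_max_left _ _)))
  · exact (hb k).trans (mul_le_mul (le_max_right _ _) (le_max_right _ _) (hb0 _)
      ((hb0 k).trans (le_max_right _ _)))

lemma monotone_ratio (ha : LogConvexSeq a) (hpos : ∀ k, 0 < a k) :
    Monotone fun k => a (k + 1) / a k := by
  refine monotone_nat_of_le_succ fun k => ?_
  rw [div_le_div_iff₀ (hpos k) (hpos (k + 1))]
  nlinarith [ha k]

lemma le_mul_ratio_pow (ha : LogConvexSeq a) (hpos : ∀ k, 0 < a k) (k : ℕ) :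
    a (k + 1) ≤ a 0 * (a (k + 1) / a k) ^ (k + 1) := by
  induction k with
  | zero => rw [zero_add, pow_one, mul_div_cancel₀ _ (hpos 0).ne']
  | succ n ih =>
    have hρ : a (n + 1) / a n ≤ a (n + 2) / a (n + 1) := ha.monotone_ratio hpos n.le_succ
    calc a (n + 2) = a (n + 1) * (a (n + 2) / a (n + 1)) := by
          rw [mul_div_cancel₀ _ (hpos (n + 1)).ne']
      _ ≤ a 0 * (a (n + 1) / a n) ^ (n + 1) * (a (n + 2) / a (n + 1)) :=
          mul_le_mul_of_nonneg_right ih (div_pos (hpos _) (hpos _)).le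
      _ ≤ a 0 * (a (n + 2) / a (n + 1)) ^ (n + 1) * (a (n + 2) / a (n + 1)) := by
          have := hpos 0; have := hpos n; have := hpos (n + 1); have := hpos (n + 2)
          gcongr
      _ = a 0 * (a (n + 2) / a (n + 1)) ^ (n + 2) := by ring

lemma summable_div_succ (ha : LogConvexSeq a) (hpos : ∀ k, 0 < a k)
    (hsum : Summable fun k : ℕ => 1 / a k ^ ((1 : ℝ) / k)) :
    Summable fun k => a k / a (k + 1) := by
  have hshift := ((summable_nat_add_iff 1).2 hsum).mul_left (max 1 (a 0))
  refine hshift.of_nonneg_of_le (fun k => div_nonneg (hpos k).le (hpos (k + 1)).le) fun k => ?_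
  have hk : (k + 1 : ℕ) ≠ 0 := k.succ_ne_zero
  set ρ := a (k + 1) / a k
  have hρ : 0 < ρ := div_pos (hpos (k + 1)) (hpos k)
  have hroot : a (k + 1) ^ ((1 : ℝ) / (k + 1 : ℕ)) ≤ max 1 (a 0) * ρ := by
    calc a (k + 1) ^ ((1 : ℝ) / (k + 1 : ℕ))
        ≤ (a 0 * ρ ^ (k + 1)) ^ ((1 : ℝ) / (k + 1 : ℕ)) :=
          rpow_le_rpow (hpos _).le (ha.le_mul_ratio_pow hpos k) (by positivity)
      _ = a 0 ^ ((1 : ℝ) / (k + 1 : ℕ)) * ρ := by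
          rw [mul_rpow (hpos 0).le (by positivity), one_div, pow_rpow_inv_natCast hρ.le hk]
      _ ≤ max 1 (a 0) * ρ := by
          gcongr; exact rpow_one_div_natCast_le_max_one (hpos 0).le _
  have := rpow_pos_of_pos (hpos (k + 1)) ((1 : ℝ) / (k + 1 : ℕ))
  rw [← one_div_div, mul_one_div, div_le_div_iff₀ hρ this]
  simpa using hroot

end LogConvexSeq

section ProductSequence

variable {c : ℝ} {r : ℕ → ℝ}

lemma logConvexSeq_mul_prod (hc : 0 ≤ c) (hr0 : ∀ i, 0 ≤ r i) (hr : Monotone r) :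
    LogConvexSeq fun k => c * ∏ i ∈ range k, r i := by
  intro k
  simp only [prod_range_succ, ← mul_assoc]
  have hP : 0 ≤ c * ∏ i ∈ range k, r i := mul_nonneg hc (prod_nonneg fun i _ => hr0 i)
  have := hr0 k
  nlinarith [mul_le_mul_of_nonneg_left (hr k.le_succ) (by positivity :
    0 ≤ (c * ∏ i ∈ range k, r i) * (c * ∏ i ∈ range k, r i) * r k)]

lemma mul_prod_le {a : ℕ → ℝ} (ha : ∀ k, 0 < a k) (hc : c ≤ a 0) (hr0 : ∀ i, 0 ≤ r i)
    (hr : ∀ k, r k ≤ a (k + 1) / a k) (k : ℕ) : c * ∏ i ∈ range k, r i ≤ a k := by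
  induction k with
  | zero => simpa using hc
  | succ n ih =>
    calc c * ∏ i ∈ range (n + 1), r i = (c * ∏ i ∈ range n, r i) * r n := by
          rw [prod_range_succ, mul_assoc]
      _ ≤ a n * (a (n + 1) / a n) := mul_le_mul ih (hr n) (hr0 n) (ha n).le
      _ = a (n + 1) := mul_div_cancel₀ _ (ha n).ne'

lemma summable_one_div_rpow_mul_prod (hc : 0 < c) (hr : ∀ i, 0 < r i)
    (hsum : Summable fun i => 1 / r i) :
    Summable fun k : ℕ => 1 / (c * ∏ i ∈ range k, r i) ^ ((1 : ℝ) / k) := by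
  have hG := (summable_geom_mean_of_summable (fun i => (one_div_pos.2 (hr i)).le) hsum).mul_left
    (max 1 (1 / c))
  refine hG.of_nonneg_of_le (fun k => ?_) fun k => ?_
  · have := prod_pos fun i (_ : i ∈ range k) => hr i
    positivity
  · have hP := prod_pos fun i (_ : i ∈ range k) => hr i
    rw [prod_div_distrib, prod_const_one, div_rpow zero_le_one hP.le, one_rpow,
      mul_rpow hc.le hP.le, ← one_div_mul_one_div, one_div (c ^ _), ← inv_rpow hc.le, ← one_div]
    gcongr
    exact rpow_one_div_natCast_le_max_one (by positivity) k

end ProductSequence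

lemma exists_logConvexSeq_le_of_summable {a b : ℕ → ℝ} (ha : LogConvexSeq a)
    (hb : LogConvexSeq b) (hapos : ∀ k, 0 < a k) (hbpos : ∀ k, 0 < b k)
    (hna : Summable fun k : ℕ => 1 / a k ^ ((1 : ℝ) / k))
    (hnb : Summable fun k : ℕ => 1 / b k ^ ((1 : ℝ) / k)) :
    ∃ m : ℕ → ℝ, (∀ k, 0 < m k) ∧ LogConvexSeq m ∧
      Summable (fun k : ℕ => 1 / m k ^ ((1 : ℝ) / k)) ∧ (∀ k, m k ≤ a k) ∧ ∀ k, m k ≤ b k := by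
  set r : ℕ → ℝ := fun k => min (a (k + 1) / a k) (b (k + 1) / b k)
  have hr : ∀ k, 0 < r k := fun k =>
    lt_min (div_pos (hapos _) (hapos _)) (div_pos (hbpos _) (hbpos _))
  have hrsum : Summable fun k => 1 / r k := by
    have hab := (ha.summable_div_succ hapos hna).add (hb.summable_div_succ hbpos hnb)
    refine hab.of_nonneg_of_le (fun k => (one_div_pos.2 (hr k)).le) fun k => ?_
    rcases min_choice (a (k + 1) / a k) (b (k + 1) / b k) with h | h <;>
      simp only [r, h, one_div_div]
    · exact le_add_of_nonneg_right (div_pos (hbpos _) (hbpos _)).le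
    · exact le_add_of_nonneg_left (div_pos (hapos _) (hapos _)).le
  have hc : 0 < min (a 0) (b 0) := lt_min (hapos 0) (hbpos 0)
  refine ⟨fun k => min (a 0) (b 0) * ∏ i ∈ range k, r i,
    fun k => mul_pos hc (prod_pos fun i _ => hr i),
    logConvexSeq_mul_prod hc.le (fun i => (hr i).le)
      ((ha.monotone_ratio hapos).min (hb.monotone_ratio hbpos)),
    summable_one_div_rpow_mul_prod hc hr hrsum,
    mul_prod_le hapos (min_le_left _ _) (fun i => (hr i).le) fun k => min_le_left _ _,
    mul_prod_le hbpos (min_le_right _ _) (fun i => (hr i).le) fun k => min_le_right _ _⟩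

/-- Two weakly log-convex non-quasianalytic majorants of a weakly log-convex `Q`
admit a common weakly log-convex non-quasianalytic minorant above `Q`. -/
theorem stmt10 (Q L1 L2 : ℕ → ℝ)
    (hQpos : ∀ k, 0 < Q k) (h1pos : ∀ k, 0 < L1 k) (h2pos : ∀ k, 0 < L2 k)
    (hQw : WeaklyLogConvex Q) (h1w : WeaklyLogConvex L1) (h2w : WeaklyLogConvex L2)
    (h1nq : NonQuasianalytic L1) (h2nq : NonQuasianalytic L2)
    (hQ1 : ∀ k, Q k ≤ L1 k) (hQ2 : ∀ k, Q k ≤ L2 k) :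
    ∃ L : ℕ → ℝ, (∀ k, 0 < L k) ∧ WeaklyLogConvex L ∧ NonQuasianalytic L ∧
      (∀ k, Q k ≤ L k) ∧ (∀ k, L k ≤ L1 k) ∧ (∀ k, L k ≤ L2 k) := by
  have hfact : ∀ k, (0 : ℝ) < k ! := fun k => by exact_mod_cast k.factorial_pos
  obtain ⟨m, hmpos, hmconv, hmsum, hm1, hm2⟩ := exists_logConvexSeq_le_of_summable
    (weaklyLogConvex_iff.1 h1w) (weaklyLogConvex_iff.1 h2w)
    (fun k => mul_pos (hfact k) (h1pos k)) (fun k => mul_pos (hfact k) (h2pos k)) h1nq h2nq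
  set L : ℕ → ℝ := fun k => max (Q k) (m k / k !)
  have hL : ∀ k, (k ! : ℝ) * L k = max (k ! * Q k) (m k) := fun k => by
    rw [mul_max_of_nonneg _ _ (hfact k).le, mul_div_cancel₀ _ (hfact k).ne']
  have hLw : LogConvexSeq fun k => (k ! : ℝ) * L k := by
    rw [funext hL]
    exact (weaklyLogConvex_iff.1 hQw).sup hmconv (fun k => (mul_pos (hfact k) (hQpos k)).le)
      fun k => (hmpos k).le
  have hLnq : Summable fun k : ℕ => 1 / ((k ! : ℝ) * L k) ^ ((1 : ℝ) / k) := by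
    simp only [hL]
    exact summable_one_div_rpow_of_le hmpos (fun k => le_max_right _ _) hmsum
  refine ⟨L, fun k => (hQpos k).trans_le (le_max_left _ _), hLw, hLnq, fun k => le_max_left _ _,
    fun k => max_le (hQ1 k) ?_, fun k => max_le (hQ2 k) ?_⟩
  · exact (div_le_iff₀' (hfact k)).2 (hm1 k)
  · exact (div_le_iff₀' (hfact k)).2 (hm2 k)
end

section
/- Define Q_k = (k log(k+e))^k/k!, Q_0 = 1. Then for every non-quasianalytic weight sequence L, there exists ρ > 0 with Q_k ≤ ρ^k L_k for all k; equivalently F^Q ⊆ F^L, i.e., F^Q is contained in the intersection of F^L over all non-quasianalytic weight sequences L. -/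
/-!
Put `λ_j = L_{j+1} / L_j`. Log-convexity makes `λ` nondecreasing, and `L_k = λ_0 ⋯ λ_{k-1}`,
so `(j! L_j)^{1/j} ≤ j λ_{j-1}`. Comparing the harmonic sum with the convergent series `S` of
the non-quasianalyticity condition gives `log (n + 2) ≤ H_{n+1} ≤ S λ_n`. Since `log x / x`
decreases on `[e, ∞)`, `(j + 1) log (k + e) ≤ (k + e) log (j + 2)` for `j < k`; multiplying
over `j < k` yields `log (k + e)^k k! ≤ (k + e)^k S^k L_k`, and two applications of
`k^k ≤ e^k k!` turn this into `Q_k ≤ ((1 + e) e² S)^k L_k`.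
-/

open Real Finset
open scoped Nat

theorem mul_log_le_mul_log_add_one {x y : ℝ} (hx : 0 ≤ x) (hxy : x + 1 ≤ y) :
    x * log y ≤ y * log (x + 1) := by
  rcases le_or_gt (exp 1) (x + 1) with he | he
  · have hanti := log_div_self_antitoneOn he (he.trans hxy) hxy
    rw [div_le_div_iff₀ (by linarith) (by linarith)] at hanti
    have hlog : 0 ≤ log y := log_nonneg (by linarith)
    nlinarith
  · have hy : 0 < y := by linarith
    have hlog_y : log y ≤ y / exp 1 := by
      have := log_le_sub_one_of_pos (div_pos hy (exp_pos 1))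
      rw [log_div hy.ne' (exp_pos 1).ne', log_exp] at this
      linarith
    have hlog_x : x / exp 1 ≤ log (x + 1) := by
      have := one_sub_inv_le_log_of_pos (show 0 < x + 1 by linarith)
      calc x / exp 1 ≤ x / (x + 1) := by gcongr
        _ = 1 - (x + 1)⁻¹ := by field_simp; ring
        _ ≤ log (x + 1) := this
    calc x * log y ≤ x * (y / exp 1) := by gcongr
      _ = y * (x / exp 1) := by ring
      _ ≤ y * log (x + 1) := by gcongr

theorem log_add_exp_one_pow_mul_factorial_le (k : ℕ) :
    log (k + exp 1) ^ k * k ! ≤ (k + exp 1) ^ k * ∏ j ∈ range k, log (j + 2) := by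
  have hlog : 0 ≤ log (k + exp 1) := log_nonneg (by linarith [add_one_le_exp (1 : ℝ)])
  rw [← prod_range_add_one_eq_factorial, Nat.cast_prod, ← card_range k, ← prod_const,
    ← prod_const, card_range, ← prod_mul_distrib, ← prod_mul_distrib]
  refine prod_le_prod (fun j _ => by positivity) fun j hj => ?_
  have hjk : (j : ℝ) + 1 ≤ k := by exact_mod_cast mem_range.mp hj
  push_cast
  rw [mul_comm, show (j : ℝ) + 2 = j + 1 + 1 by ring]
  exact mul_log_le_mul_log_add_one (by positivity) (by linarith [add_one_le_exp (1 : ℝ)])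

theorem pow_le_exp_one_pow_mul_factorial (k : ℕ) : (k : ℝ) ^ k ≤ exp 1 ^ k * k ! := by
  rw [exp_one_pow, ← div_le_iff₀ (by positivity)]
  exact pow_div_factorial_le_exp _ k.cast_nonneg k

noncomputable def weightRatio (L : ℕ → ℝ) (j : ℕ) : ℝ := L (j + 1) / L j

section WeightSequence

variable {L : ℕ → ℝ}

theorem weightRatio_pos (hpos : ∀ k, 0 < L k) (j : ℕ) : 0 < weightRatio L j :=
  div_pos (hpos _) (hpos _)

theorem weightRatio_monotone (hpos : ∀ k, 0 < L k)
    (hconv : ∀ k, 1 ≤ k → L k ^ 2 ≤ L (k - 1) * L (k + 1)) : Monotone (weightRatio L) := by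
  refine monotone_nat_of_le_succ fun j => ?_
  have h := hconv (j + 1) (by omega)
  rw [Nat.add_sub_cancel] at h
  rw [weightRatio, weightRatio, div_le_div_iff₀ (hpos j) (hpos (j + 1))]
  nlinarith

theorem prod_range_weightRatio (hpos : ∀ k, 0 < L k) (hL0 : L 0 = 1) (k : ℕ) :
    ∏ j ∈ range k, weightRatio L j = L k :=
  prod_range_induction _ _ hL0 k fun n _ => (mul_div_cancel₀ _ (hpos n).ne').symm

theorem factorial_mul_rpow_inv_le (hpos : ∀ k, 0 < L k) (hL0 : L 0 = 1)
    (hconv : ∀ k, 1 ≤ k → L k ^ 2 ≤ L (k - 1) * L (k + 1)) {k : ℕ} (hk : k ≠ 0) :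
    ((k ! : ℝ) * L k) ^ ((1 : ℝ) / k) ≤ k * weightRatio L (k - 1) := by
  have hratio := weightRatio_pos hpos (k - 1)
  have hL : L k ≤ weightRatio L (k - 1) ^ k := by
    calc L k = ∏ j ∈ range k, weightRatio L j := (prod_range_weightRatio hpos hL0 k).symm
      _ ≤ ∏ _j ∈ range k, weightRatio L (k - 1) :=
        prod_le_prod (fun j _ => (weightRatio_pos hpos j).le) fun j hj =>
          weightRatio_monotone hpos hconv (by rw [mem_range] at hj; omega)
      _ = weightRatio L (k - 1) ^ k := by rw [prod_const, card_range]
  rw [one_div, rpow_inv_le_iff_of_pos (by positivity [hpos k]) (by positivity) (by positivity),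
    rpow_natCast, mul_pow]
  exact mul_le_mul (by exact_mod_cast Nat.factorial_le_pow k) hL (hpos k).le (by positivity)

theorem log_add_two_le_tsum_mul_weightRatio (hpos : ∀ k, 0 < L k) (hL0 : L 0 = 1)
    (hconv : ∀ k, 1 ≤ k → L k ^ 2 ≤ L (k - 1) * L (k + 1))
    (hsum : Summable fun k : ℕ => 1 / (((k ! : ℝ) * L k) ^ ((1 : ℝ) / k))) (n : ℕ) :
    log (n + 2) ≤
      (∑' k : ℕ, 1 / (((k ! : ℝ) * L k) ^ ((1 : ℝ) / k))) * weightRatio L n := by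
  have hroot_pos (k : ℕ) : 0 < ((k ! : ℝ) * L k) ^ ((1 : ℝ) / k) :=
    rpow_pos_of_pos (mul_pos (by positivity) (hpos k)) _
  have hterm : ∀ j ∈ Icc 1 (n + 1),
      (j : ℝ)⁻¹ ≤ 1 / (((j ! : ℝ) * L j) ^ ((1 : ℝ) / j)) * weightRatio L n := by
    intro j hj
    obtain ⟨hj1, hjn⟩ := mem_Icc.mp hj
    have hroot := factorial_mul_rpow_inv_le hpos hL0 hconv (k := j) (by omega)
    have hmono := weightRatio_monotone hpos hconv (show j - 1 ≤ n by omega)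
    rw [one_div_mul_eq_div, le_div_iff₀ (hroot_pos j), inv_mul_le_iff₀ (by positivity)]
    exact hroot.trans (by gcongr)
  calc log (n + 2) = log ↑(n + 1 + 1) := by push_cast; ring_nf
    _ ≤ harmonic (n + 1) := log_add_one_le_harmonic (n + 1)
    _ = ∑ j ∈ Icc 1 (n + 1), (j : ℝ)⁻¹ := by
      simp only [harmonic_eq_sum_Icc, Rat.cast_sum, Rat.cast_inv, Rat.cast_natCast]
    _ ≤ ∑ j ∈ Icc 1 (n + 1), 1 / (((j ! : ℝ) * L j) ^ ((1 : ℝ) / j)) * weightRatio L n :=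
      sum_le_sum hterm
    _ ≤ _ := by
      rw [← sum_mul]
      gcongr
      · exact (weightRatio_pos hpos n).le
      · exact hsum.sum_le_tsum _ fun k _ => (one_div_pos.mpr (hroot_pos k)).le

theorem mul_log_pow_div_factorial_le {c : ℝ} (hc : 0 ≤ c) (hpos : ∀ k, 0 < L k)
    (hL0 : L 0 = 1)
    (hlog : ∀ j : ℕ, log (j + 2) ≤ c * weightRatio L j) (k : ℕ) :
    ((k : ℝ) * log (k + exp 1)) ^ k / k ! ≤ ((1 + exp 1) * exp 1 ^ 2 * c) ^ k * L k := by
  have hprod : ∏ j ∈ range k, log (j + 2) ≤ c ^ k * L k :=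
    calc ∏ j ∈ range k, log ((j : ℝ) + 2)
        ≤ ∏ j ∈ range k, c * weightRatio L j :=
          prod_le_prod (fun j _ => log_nonneg (by linarith [j.cast_nonneg (α := ℝ)]))
            fun j _ => hlog j
      _ = c ^ k * L k := by
          rw [prod_mul_distrib, prod_const, card_range, prod_range_weightRatio hpos hL0]
  have hbase : (k : ℝ) ^ k * (k + exp 1) ^ k ≤ (1 + exp 1) ^ k * ((k : ℝ) ^ k) ^ 2 := by
    rw [← mul_pow, ← pow_mul, mul_comm k 2, pow_mul, ← mul_pow]
    rcases k.eq_zero_or_pos with rfl | hk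
    · simp
    have hk1 : (1 : ℝ) ≤ k := by exact_mod_cast hk
    have hk_le_sq : exp 1 * k ≤ exp 1 * k ^ 2 := by gcongr; exact le_self_pow₀ hk1 two_ne_zero
    exact pow_le_pow_left₀ (by positivity) (by linarith) k
  have hfac : (0 : ℝ) < k ! := by positivity
  rw [div_le_iff₀ hfac]
  refine le_of_mul_le_mul_right ?_ hfac
  calc ((k : ℝ) * log (k + exp 1)) ^ k * k !
      = (k : ℝ) ^ k * (log (k + exp 1) ^ k * k !) := by ring
    _ ≤ (k : ℝ) ^ k * ((k + exp 1) ^ k * (c ^ k * L k)) := by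
        refine mul_le_mul_of_nonneg_left ?_ (by positivity)
        exact (log_add_exp_one_pow_mul_factorial_le k).trans (by gcongr)
    _ = (k : ℝ) ^ k * (k + exp 1) ^ k * (c ^ k * L k) := by ring
    _ ≤ (1 + exp 1) ^ k * ((k : ℝ) ^ k) ^ 2 * (c ^ k * L k) := by
        gcongr
        exact mul_nonneg (by positivity) (hpos k).le
    _ ≤ (1 + exp 1) ^ k * (exp 1 ^ k * k !) ^ 2 * (c ^ k * L k) := by
        gcongr
        · exact mul_nonneg (by positivity) (hpos k).le
        · exact pow_le_exp_one_pow_mul_factorial k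
    _ = ((1 + exp 1) * exp 1 ^ 2 * c) ^ k * L k * k ! * k ! := by
        rw [mul_pow ((1 + exp 1) * exp 1 ^ 2), mul_pow (1 + exp 1)]
        ring

end WeightSequence

/-- For `Q k = (k log(k+e))^k / k!`, `Q 0 = 1`, and every non-quasianalytic
weight sequence `L` there is `ρ > 0` with `Q k ≤ ρ^k L k` for all `k`,
i.e. `𝓕^Q ⊆ 𝓕^L`. -/
theorem stmt15 (Q : ℕ → ℝ) (hQ0 : Q 0 = 1)
    (hQ : ∀ k : ℕ, 1 ≤ k →
      Q k = ((k : ℝ) * Real.log ((k : ℝ) + Real.exp 1)) ^ k / (k.factorial : ℝ)) :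
    ∀ L : ℕ → ℝ, (∀ k, 0 < L k) → L 0 = 1 → 1 ≤ L 1 →
      (∀ k, 1 ≤ k → (L k) ^ 2 ≤ L (k - 1) * L (k + 1)) →
      (Summable fun k : ℕ => 1 / (((k.factorial : ℝ) * L k) ^ ((1 : ℝ) / k))) →
      ∃ ρ : ℝ, 0 < ρ ∧ ∀ k, Q k ≤ ρ ^ k * L k := by
  intro L hpos hL0 _ hconv hsum
  set S := ∑' k : ℕ, 1 / (((k ! : ℝ) * L k) ^ ((1 : ℝ) / k))
  have hlog := log_add_two_le_tsum_mul_weightRatio hpos hL0 hconv hsum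
  have hS : 0 < S := by
    have h0 := hlog 0
    rw [Nat.cast_zero, zero_add] at h0
    exact pos_of_mul_pos_left ((log_pos one_lt_two).trans_le h0) (weightRatio_pos hpos 0).le
  refine ⟨(1 + exp 1) * exp 1 ^ 2 * S, by positivity, fun k => ?_⟩
  have hQk : Q k = ((k : ℝ) * log (k + exp 1)) ^ k / k ! := by
    rcases k.eq_zero_or_pos with rfl | hk
    · simp [hQ0]
    · exact hQ k hk
  rw [hQk]
  exact mul_log_pow_div_factorial_le hS.le hpos hL0 hlog k
end

section
/- Let φ: ℕ → ℝ be piecewise affine, determined by φ(0)=0, φ(k_j) = k_j log β_j for a strictly increasing sequence k_j with k_0 > 0 and reals β_j > 1 satisfying β_{j+1} ≥ β_j^{k_j}, extended affinely between consecutive k_j (and with slope log β_0 on [0,k_0]). Then the slopes d_j = (k_j log β_j − k_{j-1} log β_{j-1})/(k_j − k_{j-1}) satisfy log β_j ≤ d_j ≤ log β_{j+1}, so φ is convex, and k ↦ φ(k)/k is increasing. -/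
/-!
The hypothesis `β (j+1) ≥ β j ^ k j` reads `k j · log β j ≤ log β (j+1)`, so the logarithms
`log β j` are positive and increase fast enough that each chord slope `d j` is squeezed between
`log β j` and `log β (j+1)`. The slopes are therefore monotone, so the increments of `φ` are
monotone (discrete convexity), and a convex `φ` with `φ 0 = 0` has `φ m / m` increasing.
-/

open Real

section ChordSlope

variable {x y a b : ℝ}

lemma le_chord_slope (hxy : x < y) (hx : 0 ≤ x) (hab : a ≤ b) :
    b ≤ (y * b - x * a) / (y - x) := by
  rw [le_div_iff₀ (sub_pos.2 hxy)]
  nlinarith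

lemma chord_slope_le {c : ℝ} (hxy : x + 1 ≤ y) (hxa : 0 ≤ x * a) (hc : 0 ≤ c)
    (hbc : y * b ≤ c) : (y * b - x * a) / (y - x) ≤ c := by
  rw [div_le_iff₀ (by linarith)]
  nlinarith

end ChordSlope

section DiscreteConvex

variable {φ : ℕ → ℝ}

lemma le_mul_increment_of_convex (h0 : φ 0 = 0)
    (hconv : ∀ m, 2 * φ (m + 1) ≤ φ m + φ (m + 2)) (m : ℕ) :
    φ m ≤ m * (φ (m + 1) - φ m) := by
  induction m with
  | zero => simp [h0]
  | succ m ih =>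
    push_cast
    nlinarith [hconv m, m.cast_nonneg (α := ℝ)]

lemma div_le_div_succ_of_convex (h0 : φ 0 = 0)
    (hconv : ∀ m, 2 * φ (m + 1) ≤ φ m + φ (m + 2)) {m : ℕ} (hm : 1 ≤ m) :
    φ m / m ≤ φ (m + 1) / (m + 1) := by
  have hm' : (0 : ℝ) < m := by exact_mod_cast hm
  rw [div_le_div_iff₀ hm' (by positivity)]
  nlinarith [le_mul_increment_of_convex h0 hconv m]

end DiscreteConvex

section PiecewiseAffine

variable {k : ℕ → ℕ} {v d φ : ℕ → ℝ}

lemma increment_eq_of_segment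
    (hφa : ∀ m : ℕ, m ≤ k 0 → φ m = d 0 * m)
    (hφb : ∀ j m : ℕ, k j ≤ m → m ≤ k (j + 1) →
      φ m = v (j + 1) + d (j + 1) * ((m : ℝ) - (k (j + 1) : ℝ)))
    {j m : ℕ} (hmj : m < k j) (hbelow : ∀ i < j, k i ≤ m) :
    φ (m + 1) - φ m = d j := by
  cases j with
  | zero =>
    rw [hφa m hmj.le, hφa (m + 1) hmj]
    push_cast
    ring
  | succ i =>
    have hi := hbelow i i.lt_succ_self
    rw [hφb i m hi hmj.le, hφb i (m + 1) (by omega) hmj]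
    push_cast
    ring

lemma increment_mono (hk : StrictMono k) (hd : Monotone d)
    (hφa : ∀ m : ℕ, m ≤ k 0 → φ m = d 0 * m)
    (hφb : ∀ j m : ℕ, k j ≤ m → m ≤ k (j + 1) →
      φ m = v (j + 1) + d (j + 1) * ((m : ℝ) - (k (j + 1) : ℝ))) :
    Monotone fun m => φ (m + 1) - φ m := by
  classical
  have hex : ∀ m, ∃ j, m < k j := fun m => ⟨m + 1, Nat.lt_of_succ_le hk.le_apply⟩
  have hincr : ∀ m, φ (m + 1) - φ m = d (Nat.find (hex m)) := fun m =>
    increment_eq_of_segment hφa hφb (Nat.find_spec (hex m))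
      fun i hi => not_lt.1 (Nat.find_min (hex m) hi)
  intro m m' hmm'
  simp only [hincr]
  exact hd (Nat.find_mono fun j hj => hmm'.trans_lt hj)

end PiecewiseAffine

/-- The piecewise affine function `φ` with `φ 0 = 0`, `φ (k j) = k j * log (β j)`
for a strictly increasing sequence `k` and `β j > 1` with `β (j+1) ≥ β j ^ (k j)`,
has slopes `d j` with `log (β j) ≤ d j ≤ log (β (j+1))`; hence `d` is monotone,
`φ` is convex, and `m ↦ φ m / m` is increasing. -/
theorem stmt16 (k : ℕ → ℕ) (β : ℕ → ℝ) (d φ : ℕ → ℝ)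
    (hk : StrictMono k) (hk0 : 0 < k 0)
    (hβ : ∀ j, 1 < β j) (hββ : ∀ j, β j ^ (k j) ≤ β (j + 1))
    (hd0 : d 0 = Real.log (β 0))
    (hd : ∀ j : ℕ, d (j + 1) =
      ((k (j + 1) : ℝ) * Real.log (β (j + 1)) - (k j : ℝ) * Real.log (β j)) /
        ((k (j + 1) : ℝ) - (k j : ℝ)))
    (hφ0 : φ 0 = 0)
    (hφa : ∀ m : ℕ, m ≤ k 0 → φ m = d 0 * m)
    (hφb : ∀ j m : ℕ, k j ≤ m → m ≤ k (j + 1) →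
      φ m = (k (j + 1) : ℝ) * Real.log (β (j + 1)) +
        d (j + 1) * ((m : ℝ) - (k (j + 1) : ℝ))) :
    (∀ j, Real.log (β j) ≤ d j) ∧ (∀ j, d j ≤ Real.log (β (j + 1))) ∧
    Monotone d ∧
    (∀ m : ℕ, 2 * φ (m + 1) ≤ φ m + φ (m + 2)) ∧
    (∀ m : ℕ, 1 ≤ m → φ m / m ≤ φ (m + 1) / (m + 1)) := by
  have hlog_pos : ∀ j, 0 < log (β j) := fun j => log_pos (hβ j)
  have hk_one : ∀ j, (1 : ℝ) ≤ k j := fun j => mod_cast hk0.trans_le (hk.monotone j.zero_le)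
  have hk_succ : ∀ j, (k j : ℝ) + 1 ≤ k (j + 1) := fun j => mod_cast hk j.lt_succ_self
  have hmul_log : ∀ j, k j * log (β j) ≤ log (β (j + 1)) := fun j =>
    le_log_of_pow_le (by linarith [hβ j]) (hββ j)
  have hlog_le : ∀ j, log (β j) ≤ log (β (j + 1)) := fun j =>
    (le_mul_of_one_le_left (hlog_pos j).le (hk_one j)).trans (hmul_log j)
  have hd_lower : ∀ j, log (β j) ≤ d j
    | 0 => hd0.ge
    | j + 1 => hd j ▸ le_chord_slope (by linarith [hk_succ j]) (Nat.cast_nonneg _) (hlog_le j)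
  have hd_upper : ∀ j, d j ≤ log (β (j + 1))
    | 0 => hd0 ▸ hlog_le 0
    | j + 1 => hd j ▸ chord_slope_le (hk_succ j) (mul_nonneg (Nat.cast_nonneg _) (hlog_pos j).le) (hlog_pos _).le (hmul_log _)
  have hd_mono : Monotone d :=
    monotone_nat_of_le_succ fun j => (hd_upper j).trans (hd_lower (j + 1))
  have hconv : ∀ m, 2 * φ (m + 1) ≤ φ m + φ (m + 2) := fun m => by
    linarith [increment_mono (v := fun j => k j * log (β j)) hk hd_mono hφa hφb m.le_succ]
  exact ⟨hd_lower, hd_upper, hd_mono, hconv, fun m => div_le_div_succ_of_convex hφ0 hconv⟩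
end

section
/- Let (č_k) be positive increasing, (l_k) positive with l_k/č_k increasing, l_0 ≥ č_0, and Σ_{k≥1} 1/l_k =: C_1 < ∞. Define q_k := č_k(1 + Σ_{j=1}^k 1/č_j). Then q_k/l_k ≤ č_1/l_1 + C_1 for all k ≥ 1; in particular q_k/l_k is bounded. -/
/-!
Expanding `q k = c k (1 + ∑_{j ≤ k} 1 / c j)` gives
`q k / l k = c k / l k + ∑_{j ≤ k} (c k / l k) / c j`. Since `l / c` is increasing, `c / l` is
decreasing, so `c k / l k ≤ c 1 / l 1` and each summand is at most `(c j / l j) / c j = 1 / l j`;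
the latter sum is bounded by `C₁`.
-/

open Finset

theorem antitone_div_of_monotone_div {α : Type*} [Preorder α] {c l : α → ℝ}
    (hc : ∀ k, 0 < c k) (hl : ∀ k, 0 < l k) (h : Monotone fun k => l k / c k) :
    Antitone fun k => c k / l k := fun j _ hjk => by
  simpa only [inv_div] using inv_anti₀ (div_pos (hl j) (hc j)) (h hjk)

theorem mul_one_add_sum_inv_div_le {c l : ℕ → ℝ} (hc : ∀ k, 0 < c k) (hl : ∀ k, 0 < l k)
    (hratio : Monotone fun k => l k / c k) (k : ℕ) :
    c k * (1 + ∑ j ∈ Icc 1 k, 1 / c j) / l k ≤ c k / l k + ∑ j ∈ Icc 1 k, 1 / l j := by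
  have hexpand : c k * (1 + ∑ j ∈ Icc 1 k, 1 / c j) / l k
      = c k / l k + ∑ j ∈ Icc 1 k, c k / l k / c j := by
    simp only [mul_add, mul_one, add_div, mul_sum, sum_div, div_div, mul_one_div, mul_comm]
  have hterm : ∀ j ∈ Icc 1 k, c k / l k / c j ≤ 1 / l j := fun j hj => calc
    c k / l k / c j ≤ c j / l j / c j :=
      div_le_div_of_nonneg_right
        (antitone_div_of_monotone_div hc hl hratio (mem_Icc.mp hj).2) (hc j).le
    _ = 1 / l j := by field_simp [(hc j).ne']
  rw [hexpand]
  exact add_le_add_right (sum_le_sum hterm) _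

theorem sum_Icc_one_le_tsum_succ {f : ℕ → ℝ} (hf : ∀ k, 0 ≤ f (k + 1))
    (hsum : Summable fun k => f (k + 1)) (n : ℕ) :
    ∑ j ∈ Icc 1 n, f j ≤ ∑' k, f (k + 1) := by
  have hshift : ∑ j ∈ Icc 1 n, f j = ∑ i ∈ range n, f (i + 1) := by
    rw [range_eq_Ico, sum_Ico_add', ← Ico_add_one_right_eq_Icc, zero_add]
  rw [hshift]
  exact hsum.sum_le_tsum _ fun i _ => hf i

theorem stmt17_general (c l : ℕ → ℝ) (C1 : ℝ)
    (hc : ∀ k, 0 < c k)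
    (hl : ∀ k, 0 < l k)
    (hratio : Monotone fun k => l k / c k)
    (hsum : Summable fun k : ℕ => 1 / l (k + 1))
    (hC1 : C1 = ∑' k : ℕ, 1 / l (k + 1)) :
    ∀ k : ℕ, 1 ≤ k →
      (c k * (1 + ∑ j ∈ Finset.Icc 1 k, 1 / c j)) / l k ≤ c 1 / l 1 + C1 := by
  intro k hk
  have hfirst : c k / l k ≤ c 1 / l 1 := antitone_div_of_monotone_div hc hl hratio hk
  have htail : ∑ j ∈ Icc 1 k, 1 / l j ≤ C1 :=
    hC1 ▸ sum_Icc_one_le_tsum_succ (fun i => (one_div_pos.mpr (hl (i + 1))).le) hsum k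
  linarith [mul_one_add_sum_inv_div_le hc hl hratio k]

/-- If `č` is positive increasing, `l` positive with `l k / č k` increasing and
`č 0 ≤ l 0`, and `C₁ = ∑_{k≥1} 1/l k < ∞`, then for
`q k = č k (1 + ∑_{j=1}^k 1/č j)` we have `q k / l k ≤ č 1 / l 1 + C₁`. -/
theorem stmt17 (c l : ℕ → ℝ) (C1 : ℝ)
    (hc : ∀ k, 0 < c k) (hcm : Monotone c)
    (hl : ∀ k, 0 < l k)
    (hratio : Monotone fun k => l k / c k)
    (h0 : c 0 ≤ l 0)
    (hsum : Summable fun k : ℕ => 1 / l (k + 1))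
    (hC1 : C1 = ∑' k : ℕ, 1 / l (k + 1)) :
    ∀ k : ℕ, 1 ≤ k →
      (c k * (1 + ∑ j ∈ Finset.Icc 1 k, 1 / c j)) / l k ≤ c 1 / l 1 + C1 :=
  stmt17_general c l C1 hc hl hratio hsum hC1
end
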